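/- arXiv:2506.13491 — 4 statements merged into one kernel-verified Lean document; each statement's English description precedes it below -/
import Mathlib

section
/- The expected value of an expression after a sampling update equals the expected value of the averaged substituted expression: Ex_{β[x↦f]}(E) = Ex_β(∑_i p_i · E[x/E_i]), where f(σ) = ∑_i p_i |σ(E_i)⟩ is a finite mixture of deterministic expressions. -/
open scoped ENNReal

def samplingEquiv {V : Type*} [DecidableEq V] (x : V) :
    ((V → ℕ) × ℕ) ≃ (Σ σ : V → ℕ, {ρ : V → ℕ // Function.update ρ x (σ x) = σ}) where
  toFun q := ⟨Function.update q.1 x q.2, ⟨q.1, by simp⟩⟩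
  invFun s := (s.2.1, s.1 x)
  left_inv q := by simp
  right_inv s := by
    obtain ⟨σ, ρ, h⟩ := s
    simp only [Function.update_self]
    congr 1 <;> try exact h
    rw [Subtype.heq_iff_coe_eq]
    intro ρ'
    rw [h]

/-- expected value of an expression after sampling from a
finite mixture of deterministic expressions equals the expectation of the
averaged substituted expression. -/
theorem expectation_after_sampling {V : Type*} [DecidableEq V]
    (β : (V → ℕ) → ℝ≥0∞) (hβ : ∑' σ, β σ = 1) (x : V)
    (n : ℕ) (p : Fin n → ℝ≥0∞) (hp : ∑ i, p i = 1)
    (Es : Fin n → (V → ℕ) → ℕ) (E : (V → ℕ) → ℝ≥0∞) :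
    ∑' σ : V → ℕ,
        (∑' ρ : {ρ : V → ℕ // Function.update ρ x (σ x) = σ},
          β ρ.1 * (∑ i, p i * (if Es i ρ.1 = σ x then 1 else 0))) * E σ
      = ∑' ρ : V → ℕ, β ρ * ∑ i, p i * E (Function.update ρ x (Es i ρ)) := by
  rw [tsum_congr fun σ : V → ℕ => (ENNReal.tsum_mul_right).symm]
  rw [← ENNReal.tsum_sigma
    (f := fun σ (ρ : {ρ : V → ℕ // Function.update ρ x (σ x) = σ}) =>
      β ρ.1 * (∑ i, p i * (if Es i ρ.1 = σ x then 1 else 0)) * E σ)]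
  rw [← (samplingEquiv x).tsum_eq]
  simp only [samplingEquiv, Equiv.coe_fn_mk, Function.update_self]
  rw [ENNReal.tsum_prod (f := fun ρ k =>
    (β ρ * ∑ i, p i * if Es i ρ = k then 1 else 0) * E (Function.update ρ x k))]
  refine tsum_congr fun ρ => ?_
  have hstep : ∀ k : ℕ,
      β ρ * (∑ i, p i * (if Es i ρ = k then 1 else 0)) * E (Function.update ρ x k)
      = ∑ i, β ρ * (p i * (if Es i ρ = k then 1 else 0) * E (Function.update ρ x k)) := by
    intro k
    rw [Finset.mul_sum, Finset.sum_mul]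
    refine Finset.sum_congr rfl fun i _ => by ring
  simp only [hstep]
  rw [Summable.tsum_finsetSum fun i _ => ENNReal.summable, Finset.mul_sum]
  refine Finset.sum_congr rfl fun i _ => ?_
  rw [tsum_eq_single (Es i ρ)]
  · simp [mul_assoc]
  · intro k hk
    simp [Ne.symm hk]
end

section
/- The assignment update preserves consistency of belief states: if β is consistent and E_o is an observable expression (its value depends only on observable variables), then β[x_o↦E_o] is consistent, where x_o is an observable variable. -/
open scoped ENNReal

/-- A belief state is consistent if all assignments with positive probability
agree on every observable variable. -/
def Consistent {Vo Vu : Type*} (β : ((Vo ⊕ Vu) → ℕ) → ℝ≥0∞) : Prop :=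
  ∀ σ σ', 0 < β σ → 0 < β σ' → ∀ x : Vo, σ (Sum.inl x) = σ' (Sum.inl x)

/-- the assignment update `β[x_o ↦ E_o]` for an observable
variable `x_o` and an observable expression `E_o` preserves consistency. -/
theorem assignment_preserves_consistency {Vo Vu : Type*} [DecidableEq Vo] [DecidableEq Vu]
    (β : ((Vo ⊕ Vu) → ℕ) → ℝ≥0∞) (hβ : ∑' σ, β σ = 1)
    (hcons : Consistent β)
    (x : Vo) (E : ((Vo ⊕ Vu) → ℕ) → ℕ)
    (hE : ∀ σ σ', (∀ y : Vo, σ (Sum.inl y) = σ' (Sum.inl y)) → E σ = E σ') :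
    Consistent (fun σ' : (Vo ⊕ Vu) → ℕ =>
      ∑' ρ : {ρ : (Vo ⊕ Vu) → ℕ // Function.update ρ (Sum.inl x) (E ρ) = σ'}, β ρ.1) := by
  intro σ σ' hσ hσ' y
  obtain ⟨ρ, hρ⟩ : ∃ ρ : {ρ : (Vo ⊕ Vu) → ℕ // Function.update ρ (Sum.inl x) (E ρ) = σ}, 0 < β ρ.1 := by
    by_contra h
    push_neg at h
    simp only [nonpos_iff_eq_zero] at h
    simp [tsum_congr h] at hσ
  obtain ⟨ρ', hρ'⟩ : ∃ ρ' : {ρ : (Vo ⊕ Vu) → ℕ // Function.update ρ (Sum.inl x) (E ρ) = σ'}, 0 < β ρ'.1 := by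
    by_contra h
    push_neg at h
    simp only [nonpos_iff_eq_zero] at h
    simp [tsum_congr h] at hσ'
  have hobs : ∀ z : Vo, ρ.1 (Sum.inl z) = ρ'.1 (Sum.inl z) := hcons ρ.1 ρ'.1 hρ hρ'
  rw [← ρ.2, ← ρ'.2]
  by_cases hy : y = x
  · subst hy
    simp [Function.update_self, hE ρ.1 ρ'.1 hobs]
  · have : (Sum.inl y : Vo ⊕ Vu) ≠ Sum.inl x := by simp [hy]
    simp [Function.update_of_ne this, hobs y]
end

section
/- If Φ_f(X) := p·W(X) + (1−p)·f is linear in its subscript in the sense that W is linear (W(αF+G) = α·W(F)+W(G) for α ∈ ℝ≥0), then for all n ∈ ℕ: Φ_{αF+G}ⁿ(0) = α·Φ_Fⁿ(0) + Φ_Gⁿ(0); consequently the least fixed points satisfy lfp Φ_{αF+G} = α·lfp Φ_F + lfp Φ_G, assuming each lfp is the supremum of the Kleene chain. -/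
open scoped ENNReal NNReal

/-- The characteristic function `Φ_f(X) = p·W(X) + (1−p)·f`. -/
noncomputable def Phi {D : Type*} (p : D → ℝ≥0∞)
    (W : (D → ℝ≥0∞) → (D → ℝ≥0∞)) (f : D → ℝ≥0∞) :
    (D → ℝ≥0∞) → (D → ℝ≥0∞) :=
  fun X β => p β * W X β + (1 - p β) * f β

/-- if `W` is monotone, ω-continuous and linear, then the Kleene
iterates of `Φ_f` are linear in the subscript `f`, and consequently the least
fixed points (given as suprema of the Kleene chains) decompose linearly. -/
theorem kleene_chain_linear {D : Type*}
    (p : D → ℝ≥0∞) (hp : ∀ β, p β ≤ 1)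
    (W : (D → ℝ≥0∞) → (D → ℝ≥0∞)) (hW : Monotone W)
    (hcont : ∀ f : ℕ → (D → ℝ≥0∞), Monotone f → W (⨆ n, f n) = ⨆ n, W (f n))
    (hlin : ∀ (α : ℝ≥0) (F G : D → ℝ≥0∞),
      W (fun β => (α : ℝ≥0∞) * F β + G β) = fun β => (α : ℝ≥0∞) * W F β + W G β)
    (α : ℝ≥0) (F G : D → ℝ≥0∞) :
    (∀ n : ℕ,
      (Phi p W (fun β => (α : ℝ≥0∞) * F β + G β))^[n] ⊥
        = fun β => (α : ℝ≥0∞) * (Phi p W F)^[n] ⊥ β + (Phi p W G)^[n] ⊥ β) ∧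
    (⨆ n, (Phi p W (fun β => (α : ℝ≥0∞) * F β + G β))^[n] ⊥)
      = fun β => (α : ℝ≥0∞) * (⨆ n, (Phi p W F)^[n] ⊥) β + (⨆ n, (Phi p W G)^[n] ⊥) β := by
  have hmono : ∀ f : D → ℝ≥0∞, Monotone (Phi p W f) := by
    intro f X Y hXY β
    exact add_le_add (mul_le_mul_right (hW hXY β) _) le_rfl
  have hiter : ∀ (f : D → ℝ≥0∞), Monotone (fun n => (Phi p W f)^[n] ⊥) := by
    intro f
    refine monotone_nat_of_le_succ fun n => ?_
    induction n with
    | zero => exact bot_le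
    | succ n ih =>
      rw [Function.iterate_succ_apply', Function.iterate_succ_apply']
      exact hmono f ih
  have key : ∀ n : ℕ,
      (Phi p W (fun β => (α : ℝ≥0∞) * F β + G β))^[n] ⊥
        = fun β => (α : ℝ≥0∞) * (Phi p W F)^[n] ⊥ β + (Phi p W G)^[n] ⊥ β := by
    intro n
    induction n with
    | zero =>
      funext β
      simp [Pi.bot_apply]
    | succ n ih =>
      rw [Function.iterate_succ_apply', Function.iterate_succ_apply',
        Function.iterate_succ_apply', ih]
      funext β
      simp only [Phi, hlin]
      ring
  refine ⟨key, ?_⟩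
  funext β
  rw [iSup_apply, iSup_apply, iSup_apply]
  have h1 : ∀ n, (Phi p W (fun β => (α : ℝ≥0∞) * F β + G β))^[n] ⊥ β
      = (α : ℝ≥0∞) * (Phi p W F)^[n] ⊥ β + (Phi p W G)^[n] ⊥ β := by
    intro n; rw [key n]
  simp only [h1]
  rw [ENNReal.mul_iSup]
  rw [ENNReal.iSup_add_iSup]
  intro i j
  exact ⟨max i j,
    add_le_add (mul_le_mul_right (hiter F (le_max_left i j) β) _)
      (hiter G (le_max_right i j) β)⟩
end

section
/- Independence of wp for sampling: if a proposition P does not mention the variable x (i.e. [σ ⊨ P] = [σ[x↦c] ⊨ P] for all σ, c), then for any sampling function f with ∑_c f(ρ)(c) = 1 for all ρ, the probability of P is invariant under the sampling update: Pr_{β[x↦f]}(P) = Pr_β(P). -/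
open scoped ENNReal

/-- independence of `wp` for sampling: if a proposition `P`
does not mention `x`, then `Pr_{β[x↦f]}(P) = Pr_β(P)`. -/
theorem sampling_independence {V : Type*} [DecidableEq V]
    (β : (V → ℕ) → ℝ≥0∞) (hβ : ∑' σ, β σ = 1)
    (x : V) (f : (V → ℕ) → ℕ → ℝ≥0∞) (hf : ∀ ρ, ∑' c, f ρ c = 1)
    (P : (V → ℕ) → Prop) [DecidablePred P]
    (hP : ∀ (σ : V → ℕ) (c : ℕ), P (Function.update σ x c) ↔ P σ) :
    ∑' σ : V → ℕ,
        (∑' ρ : {ρ : V → ℕ // Function.update ρ x (σ x) = σ},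
          β ρ.1 * f ρ.1 (σ x)) * (if P σ then 1 else 0)
      = ∑' σ : V → ℕ, β σ * (if P σ then 1 else 0) := by
  let e : ((V → ℕ) × ℕ) ≃
      Σ σ : V → ℕ, {ρ : V → ℕ // Function.update ρ x (σ x) = σ} :=
    { toFun := fun p => ⟨Function.update p.1 x p.2,
        ⟨p.1, by simp [Function.update_idem]⟩⟩
      invFun := fun q => (q.2.1, q.1 x)
      left_inv := fun p => by simp
      right_inv := fun q => by
        obtain ⟨σ, ρ, h⟩ := q
        have hx : Function.update ρ x (σ x) = σ := h
        refine Sigma.ext (by simpa using hx) ?_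
        rw [Subtype.heq_iff_coe_eq (fun ρ' => by simp [hx])] }
  calc
    ∑' σ : V → ℕ,
        (∑' ρ : {ρ : V → ℕ // Function.update ρ x (σ x) = σ},
          β ρ.1 * f ρ.1 (σ x)) * (if P σ then 1 else 0)
      = ∑' σ : V → ℕ,
        ∑' ρ : {ρ : V → ℕ // Function.update ρ x (σ x) = σ},
          β ρ.1 * f ρ.1 (σ x) * (if P ρ.1 then 1 else 0) := by
        refine tsum_congr fun σ => ?_
        rw [← ENNReal.tsum_mul_right]
        refine tsum_congr fun ρ => ?_
        have : P σ ↔ P ρ.1 := by have h := hP ρ.1 (σ x); rw [ρ.2] at h; exact h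
        simp [this]
    _ = ∑' q : Σ σ : V → ℕ, {ρ : V → ℕ // Function.update ρ x (σ x) = σ},
          β q.2.1 * f q.2.1 (q.1 x) * (if P q.2.1 then 1 else 0) :=
        (ENNReal.tsum_sigma _).symm
    _ = ∑' p : (V → ℕ) × ℕ,
          β p.1 * f p.1 p.2 * (if P p.1 then 1 else 0) := by
        rw [← e.tsum_eq]
        refine tsum_congr fun p => ?_
        simp [e]
    _ = ∑' σ : V → ℕ, β σ * (if P σ then 1 else 0) := by
        rw [ENNReal.tsum_prod']
        refine tsum_congr fun ρ => ?_
        calc ∑' c, β ρ * f ρ c * (if P ρ then 1 else 0)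
            = (β ρ * (if P ρ then 1 else 0)) * ∑' c, f ρ c := by
              rw [ENNReal.tsum_mul_left.symm]
              refine tsum_congr fun c => by ring
          _ = β ρ * (if P ρ then 1 else 0) := by rw [hf, mul_one]
end
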